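/- arXiv:1912.13102 — 2 statements merged into one kernel-verified Lean document; each statement's English description precedes it below -/
import Mathlib

section
/- Let K ⊂ ℝ^m be a measurable set with positive Lebesgue measure. Then for almost every p ∈ K, K is a C^∞-uniqueness set at p; that is, every C^∞ function f defined on an open connected neighbourhood of K with f|_K = 0 has all partial derivatives of all orders vanishing at p. -/
open Set MeasureTheory Metric Filter Topology
open scoped ENNReal

variable {m : ℕ}

section Aux
local notation "E" => EuclideanSpace ℝ (Fin m)

/-- If `p` is a density point of `S`, then for every direction `v` and every `ε > 0`,
for all small `t > 0` the ball of radius `ε t` around `p + t v` meets `S`. -/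
lemma density_approx {S : Set E} {p : E}
    (hd : Tendsto (fun r => volume (S ∩ closedBall p r) / volume (closedBall p r))
      (𝓝[>] 0) (𝓝 1)) (v : E) {ε : ℝ} (hε : 0 < ε) :
    ∀ᶠ t in 𝓝[>] (0 : ℝ), (S ∩ closedBall (p + t • v) (ε * t)).Nonempty := by
  set d := Module.finrank ℝ E with hdd
  set R : ℝ := ‖v‖ + ε with hR
  have hRpos : 0 < R := by positivity
  have hεR : ε ≤ R := by simp [hR, norm_nonneg]
  set a : ℝ := 1 - (ε / R) ^ d / 2 with ha
  have hapos : 0 ≤ a := by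
    have h1 : (ε / R) ^ d ≤ 1 := by
      apply pow_le_one₀ (by positivity)
      rw [div_le_one hRpos]; exact hεR
    simp only [ha]; linarith
  have ha1 : ENNReal.ofReal a < 1 := by
    rw [← ENNReal.ofReal_one]
    apply ENNReal.ofReal_lt_ofReal_iff_of_nonneg hapos |>.2
    have : 0 < (ε / R) ^ d := by positivity
    simp only [ha]; linarith
  have hRt : Tendsto (fun t : ℝ => R * t) (𝓝[>] 0) (𝓝[>] 0) := by
    rw [tendsto_nhdsWithin_iff]
    constructor
    · have : Tendsto (fun t : ℝ => R * t) (𝓝 0) (𝓝 (R * 0)) :=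
        (continuous_const.mul continuous_id).tendsto 0
      simpa using this.mono_left nhdsWithin_le_nhds
    · filter_upwards [self_mem_nhdsWithin] with t ht
      exact mul_pos hRpos ht
  have h1 : ∀ᶠ t in 𝓝[>] (0 : ℝ),
      ENNReal.ofReal a < volume (S ∩ closedBall p (R * t)) / volume (closedBall p (R * t)) :=
    hRt.eventually (hd.eventually (eventually_gt_nhds ha1))
  filter_upwards [h1, self_mem_nhdsWithin] with t h1t ht
  replace ht : 0 < t := ht
  apply nonempty_of_measure_ne_zero (μ := (volume : Measure E))
  intro h0
  set c : ℝ≥0∞ := volume (ball (0 : E) 1) with hc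
  set X : ℝ≥0∞ := volume (closedBall p (R * t)) with hX
  set Y : ℝ≥0∞ := volume (closedBall (p + t • v) (ε * t)) with hY
  have hXval : X = ENNReal.ofReal ((R * t) ^ d) * c :=
    Measure.addHaar_closedBall _ _ (by positivity)
  have hYval : Y = ENNReal.ofReal ((ε * t) ^ d) * c :=
    Measure.addHaar_closedBall _ _ (by positivity)
  have hX0 : X ≠ 0 := (measure_closedBall_pos _ _ (by positivity)).ne'
  have hXtop : X ≠ ⊤ := measure_closedBall_lt_top.ne
  have hYtop : Y ≠ ⊤ := measure_closedBall_lt_top.ne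
  have hsubB : closedBall (p + t • v) (ε * t) ⊆ closedBall p (R * t) := by
    apply closedBall_subset_closedBall'
    rw [dist_self_add_left, norm_smul, Real.norm_of_nonneg ht.le]
    ring_nf
    nlinarith
  have hYX : Y ≤ X := measure_mono hsubB
  -- from the density bound
  have hgt : ENNReal.ofReal a * X < volume (S ∩ closedBall p (R * t)) :=
    (ENNReal.lt_div_iff_mul_lt (Or.inl hX0) (Or.inl hXtop)).1 h1t
  -- upper bound on the same quantity
  have hsubset : S ∩ closedBall p (R * t) ⊆
      (closedBall p (R * t) \ closedBall (p + t • v) (ε * t)) ∪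
        (S ∩ closedBall (p + t • v) (ε * t)) := by
    intro x hx
    by_cases hxb : x ∈ closedBall (p + t • v) (ε * t)
    · exact Or.inr ⟨hx.1, hxb⟩
    · exact Or.inl ⟨hx.2, hxb⟩
  have hdiffval : volume (closedBall p (R * t) \ closedBall (p + t • v) (ε * t)) = X - Y :=
    measure_diff hsubB measurableSet_closedBall.nullMeasurableSet hYtop
  have hle : volume (S ∩ closedBall p (R * t)) ≤ X - Y := by
    calc volume (S ∩ closedBall p (R * t))
        ≤ volume (closedBall p (R * t) \ closedBall (p + t • v) (ε * t)) +
            volume (S ∩ closedBall (p + t • v) (ε * t)) :=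
          (measure_mono hsubset).trans (measure_union_le _ _)
      _ = X - Y := by rw [h0, add_zero, hdiffval]
  have hlt : ENNReal.ofReal a * X + Y < X := by
    have := lt_of_lt_of_le hgt hle
    rw [lt_tsub_iff_right] at this
    exact this
  -- but in fact X ≤ ofReal a * X + Y
  have hkey : X ≤ ENNReal.ofReal a * X + Y := by
    have h2 : (ε / R) ^ d * (R * t) ^ d = (ε * t) ^ d := by
      rw [← mul_pow]; congr 1; field_simp
    have hreal : (R * t) ^ d ≤ a * (R * t) ^ d + (ε * t) ^ d := by
      rw [ha]
      nlinarith [h2, pow_nonneg (by positivity : (0:ℝ) ≤ ε * t) d]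
    calc X = ENNReal.ofReal ((R * t) ^ d) * c := hXval
      _ ≤ ENNReal.ofReal (a * (R * t) ^ d + (ε * t) ^ d) * c := by
          gcongr
      _ = (ENNReal.ofReal (a * (R * t) ^ d) + ENNReal.ofReal ((ε * t) ^ d)) * c := by
          rw [ENNReal.ofReal_add (by positivity) (by positivity)]
      _ = ENNReal.ofReal a * X + Y := by
          rw [hXval, hYval, add_mul, ← mul_assoc, ← ENNReal.ofReal_mul hapos]
  exact absurd hkey (not_le.2 hlt)

/-- A function vanishing on a set `S` of density one at `p`, with value `0` at `p` and
differentiable at `p`, has zero derivative at `p`. -/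
lemma fderiv_eq_zero_of_density {S : Set E} {p : E}
    (hd : Tendsto (fun r => volume (S ∩ closedBall p r) / volume (closedBall p r))
      (𝓝[>] 0) (𝓝 1))
    {F : Type*} [NormedAddCommGroup F] [NormedSpace ℝ F]
    {g : E → F} {L : E →L[ℝ] F} (hg : HasFDerivAt g L p)
    (hgp : g p = 0) (hgS : ∀ x ∈ S, g x = 0) : L = 0 := by
  ext v
  rw [ContinuousLinearMap.zero_apply, ← norm_eq_zero]
  set C : ℝ := ‖v‖ + ‖L‖ + 1 with hC
  have hCpos : 0 < C := by positivity
  have key : ∀ ε : ℝ, 0 < ε → ε ≤ 1 → ‖L v‖ ≤ ε * C := by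
    intro ε hε hε1
    have hlo : ∀ᶠ x in 𝓝 p, ‖g x - g p - L (x - p)‖ ≤ ε * ‖x - p‖ :=
      hg.isLittleO.def hε
    obtain ⟨δ, hδpos, hball⟩ := Metric.eventually_nhds_iff.1 hlo
    have hA := density_approx hd v hε
    have h2 : ∀ᶠ t in 𝓝[>] (0 : ℝ), t < δ / (‖v‖ + ε) :=
      nhdsWithin_le_nhds (Iio_mem_nhds (by positivity))
    obtain ⟨t, ⟨⟨x, hxS, hxball⟩, htδ⟩, ht⟩ := ((hA.and h2).and self_mem_nhdsWithin).exists
    replace ht : 0 < t := ht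
    have hxdist : dist x (p + t • v) ≤ ε * t := mem_closedBall.1 hxball
    have hxp : ‖x - p‖ ≤ (‖v‖ + ε) * t := by
      have h3 : dist x p ≤ dist x (p + t • v) + dist (p + t • v) p := dist_triangle _ _ _
      rw [dist_self_add_left, norm_smul, Real.norm_of_nonneg ht.le] at h3
      rw [← dist_eq_norm]
      nlinarith
    have hxpδ : dist x p < δ := by
      rw [dist_eq_norm]
      calc ‖x - p‖ ≤ (‖v‖ + ε) * t := hxp
        _ < (‖v‖ + ε) * (δ / (‖v‖ + ε)) := by
            apply mul_lt_mul_of_pos_left htδ (by positivity)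
        _ = δ := by field_simp
    have hgx : g x = 0 := hgS x hxS
    have hb := hball hxpδ
    rw [hgx, hgp] at hb
    simp only [sub_self, zero_sub, norm_neg] at hb
    -- hb : ‖L (x - p)‖ ≤ ε * ‖x - p‖
    have hLtv : L (t • v) = L (x - p) + L ((p + t • v) - x) := by
      rw [← map_add]; congr 1; abel
    have hnorm2 : ‖L ((p + t • v) - x)‖ ≤ ‖L‖ * (ε * t) := by
      calc ‖L ((p + t • v) - x)‖ ≤ ‖L‖ * ‖(p + t • v) - x‖ := L.le_opNorm _
        _ ≤ ‖L‖ * (ε * t) := by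
            apply mul_le_mul_of_nonneg_left _ (norm_nonneg L)
            rw [← dist_eq_norm, dist_comm]
            exact hxdist
    have hfinal : t * ‖L v‖ ≤ ε * ((‖v‖ + ε) * t) + ‖L‖ * (ε * t) := by
      have h4 : ‖L (t • v)‖ = t * ‖L v‖ := by
        rw [L.map_smul, norm_smul, Real.norm_of_nonneg ht.le]
      calc t * ‖L v‖ = ‖L (t • v)‖ := h4.symm
        _ ≤ ‖L (x - p)‖ + ‖L ((p + t • v) - x)‖ := by rw [hLtv]; exact norm_add_le _ _
        _ ≤ ε * ‖x - p‖ + ‖L‖ * (ε * t) := by gcongr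
        _ ≤ ε * ((‖v‖ + ε) * t) + ‖L‖ * (ε * t) := by gcongr
    have hstep : t * ‖L v‖ ≤ t * (ε * C) := by
      rw [hC]
      nlinarith [hfinal, mul_nonneg hε.le ht.le, sub_nonneg.2 hε1]
    exact le_of_mul_le_mul_left hstep ht
  -- conclude
  by_contra hne
  have hpos : 0 < ‖L v‖ := lt_of_le_of_ne (norm_nonneg _) (Ne.symm hne)
  set ε : ℝ := min 1 (‖L v‖ / (2 * C)) with hεdef
  have hεpos : 0 < ε := lt_min one_pos (by positivity)
  have h5 := key ε hεpos (min_le_left _ _)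
  have h6 : ε * C ≤ ‖L v‖ / 2 := by
    calc ε * C ≤ (‖L v‖ / (2 * C)) * C := by
          apply mul_le_mul_of_nonneg_right (min_le_right _ _) hCpos.le
      _ = ‖L v‖ / 2 := by field_simp
  have h7 := le_trans h5 h6
  linarith
end Aux

/-- `K` is a `C^∞`-uniqueness set at `p`: every `C^∞` function defined on an open connected
neighbourhood of `K` (containing `p`) and vanishing on `K` is flat at `p`, i.e. all its
iterated derivatives of all orders vanish at `p`. -/
def IsUniquenessSetAt {E : Type*} [NormedAddCommGroup E] [NormedSpace ℝ E]
    (K : Set E) (p : E) : Prop :=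
  ∀ U : Set E, IsOpen U → IsConnected U → K ⊆ U → p ∈ U →
    ∀ f : E → ℝ, ContDiffOn ℝ (⊤ : ℕ∞) f U → (∀ x ∈ K, f x = 0) →
      ∀ n : ℕ, iteratedFDerivWithin ℝ n f U p = 0

/-- A measurable set `K ⊆ ℝ^m` of positive Lebesgue measure is a
`C^∞`-uniqueness set at almost every one of its points. -/
theorem stmt2 {m : ℕ} (K : Set (EuclideanSpace ℝ (Fin m)))
    (hK : MeasurableSet K) (hpos : 0 < volume K) :
    ∀ᵐ p ∂(volume : Measure (EuclideanSpace ℝ (Fin m))),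
      p ∈ K → IsUniquenessSetAt K p := by
  classical
  set μ := (volume : Measure (EuclideanSpace ℝ (Fin m))) with hμ
  set Dens : EuclideanSpace ℝ (Fin m) → Prop := fun x =>
    Tendsto (fun r => μ (K ∩ closedBall x r) / μ (closedBall x r)) (𝓝[>] 0) (𝓝 1) with hDens
  have hBes : ∀ᵐ x ∂μ.restrict K, Dens x := Besicovitch.ae_tendsto_measure_inter_div μ K
  have hnull : μ ({x | ¬ Dens x} ∩ K) = 0 := by
    rw [← Measure.restrict_apply' hK]
    exact ae_iff.1 hBes
  set N : Set (EuclideanSpace ℝ (Fin m)) := toMeasurable μ ({x | ¬ Dens x} ∩ K) with hN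
  have hNnull : μ N = 0 := by rw [hN, measure_toMeasurable]; exact hnull
  set S : Set (EuclideanSpace ℝ (Fin m)) := K \ N with hS
  have hSsub : ∀ x ∈ S, x ∈ K ∧ Dens x := by
    intro x hx
    refine ⟨hx.1, ?_⟩
    by_contra hcon
    exact hx.2 (subset_toMeasurable _ _ ⟨hcon, hx.1⟩)
  have hmeasS : ∀ (x : EuclideanSpace ℝ (Fin m)) (r : ℝ),
      μ (S ∩ closedBall x r) = μ (K ∩ closedBall x r) := by
    intro x r
    apply le_antisymm (measure_mono (inter_subset_inter_left _ diff_subset))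
    calc μ (K ∩ closedBall x r) ≤ μ ((S ∩ closedBall x r) ∪ N) := by
          apply measure_mono
          intro y hy
          by_cases hyN : y ∈ N
          · exact Or.inr hyN
          · exact Or.inl ⟨⟨hy.1, hyN⟩, hy.2⟩
      _ ≤ μ (S ∩ closedBall x r) + μ N := measure_union_le _ _
      _ = μ (S ∩ closedBall x r) := by rw [hNnull, add_zero]
  have hdensS : ∀ p : EuclideanSpace ℝ (Fin m), Dens p →
      Tendsto (fun r => μ (S ∩ closedBall p r) / μ (closedBall p r)) (𝓝[>] 0) (𝓝 1) := by
    intro p hp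
    apply hp.congr
    intro r
    rw [hmeasS]
  -- main induction
  have main : ∀ (n : ℕ) (U : Set (EuclideanSpace ℝ (Fin m))), IsOpen U → K ⊆ U →
      ∀ f : EuclideanSpace ℝ (Fin m) → ℝ, ContDiffOn ℝ (⊤ : ℕ∞) f U → (∀ x ∈ K, f x = 0) →
      ∀ p ∈ K, Dens p → iteratedFDeriv ℝ n f p = 0 := by
    intro n
    induction n with
    | zero =>
      intro U hU hKU f hf hf0 p hp _
      ext v
      simp [iteratedFDeriv_zero_apply, hf0 p hp]
    | succ n IH =>
      intro U hU hKU f hf hf0 p hp hdens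
      have hpU : p ∈ U := hKU hp
      have hdiffW : DifferentiableOn ℝ (iteratedFDerivWithin ℝ n f U) U :=
        hf.differentiableOn_iteratedFDerivWithin (by exact_mod_cast ENat.coe_lt_top n : (n : WithTop ℕ∞) < ((⊤ : ℕ∞) : WithTop ℕ∞))
          hU.uniqueDiffOn
      have hdiff : DifferentiableAt ℝ (iteratedFDeriv ℝ n f) p := by
        have h2 : DifferentiableAt ℝ (iteratedFDerivWithin ℝ n f U) p :=
          hdiffW.differentiableAt (hU.mem_nhds hpU)
        apply h2.congr_of_eventuallyEq
        filter_upwards [hU.mem_nhds hpU] with x hx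
        exact (iteratedFDerivWithin_of_isOpen n hU hx).symm
      have hL0 : fderiv ℝ (iteratedFDeriv ℝ n f) p = 0 := by
        apply fderiv_eq_zero_of_density (hdensS p hdens) hdiff.hasFDerivAt
        · exact IH U hU hKU f hf hf0 p hp hdens
        · intro x hx
          obtain ⟨hxK, hxD⟩ := hSsub x hx
          exact IH U hU hKU f hf hf0 x hxK hxD
      have heq : iteratedFDeriv ℝ (n + 1) f p =
          (continuousMultilinearCurryLeftEquiv ℝ
            (fun _ : Fin (n + 1) => EuclideanSpace ℝ (Fin m)) ℝ).symm
            (fderiv ℝ (iteratedFDeriv ℝ n f) p) := rfl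
      rw [heq, hL0]
      exact LinearIsometryEquiv.map_zero _
  -- conclude
  filter_upwards [ae_imp_of_ae_restrict hBes] with p hdens hp
  intro U hU _hUconn hKU hpU f hf hf0 n
  rw [iteratedFDerivWithin_of_isOpen n hU hpU]
  exact main n U hU hKU f hf hf0 p hp (hdens hp)
end

section
/- Let G : 𝕋^d × B → 𝕋^d × ℝ^d (B an open ball in ℝ^d) be a C^∞ symplectic map (with respect to the canonical symplectic form dθ ∧ dI) of the form G(θ, I) = (θ + g₁(θ, I), I + g₂(θ, I)) where g₂ is flat along 𝕋^d × {0} (g₂ = O^∞(I)). Then ∂_θ g₁ is also flat along 𝕋^d × {0}; consequently g₁(θ, I) = [g₁](I) + O^∞(I), where [g₁](I) denotes the average of g₁(·, I) over 𝕋^d. -/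
set_option synthInstance.maxHeartbeats 1000000
set_option maxHeartbeats 1000000


open Set MeasureTheory

noncomputable section

variable {d : ℕ}

/-- The canonical symplectic form `dθ ∧ dI` on `ℝ^d × ℝ^d` (tangent space of `𝕋^d × ℝ^d`). -/
def stdSymp (u v : EuclideanSpace ℝ (Fin d) × EuclideanSpace ℝ (Fin d)) : ℝ :=
  inner ℝ u.1 v.2 - inner ℝ u.2 v.1

/-- The fundamental cube `[0,1]^d`, a fundamental domain of `𝕋^d = ℝ^d/ℤ^d`. -/
def cube (d : ℕ) : Set (EuclideanSpace ℝ (Fin d)) := {θ | ∀ i, θ i ∈ Set.Icc (0:ℝ) 1}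

/-- The integer vector `k` viewed as an element of `ℝ^d`. -/
def intVec (k : Fin d → ℤ) : EuclideanSpace ℝ (Fin d) :=
  (WithLp.equiv 2 (Fin d → ℝ)).symm fun i => (k i : ℝ)


-- generic flat lemmas
section Flat
variable {X U V W : Type*} [NormedAddCommGroup X] [NormedSpace ℝ X]
    [NormedAddCommGroup U] [NormedSpace ℝ U] [NormedAddCommGroup V] [NormedSpace ℝ V]
    [NormedAddCommGroup W] [NormedSpace ℝ W]
    {s : Set X} {x : X}

lemma flat_bilin (hs : UniqueDiffOn ℝ s) (hx : x ∈ s)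
    (B : U →L[ℝ] V →L[ℝ] W) {f : X → U} {g : X → V}
    (hf : ∀ k : ℕ, ContDiffOn ℝ k f s) (hg : ∀ k : ℕ, ContDiffOn ℝ k g s)
    (hflat : ∀ m : ℕ, iteratedFDerivWithin ℝ m f s x = 0) (n : ℕ) :
    iteratedFDerivWithin ℝ n (fun y => B (f y) (g y)) s x = 0 := by
  have h := B.norm_iteratedFDerivWithin_le_of_bilinear (hf n) (hg n) hs hx
    (le_refl (n : WithTop ℕ∞))
  rw [← norm_le_zero_iff]
  refine h.trans (le_of_eq ?_)
  rw [Finset.sum_eq_zero, mul_zero]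
  intro i _
  rw [hflat i, norm_zero, mul_zero, zero_mul]

lemma flat_fderivWithin (hs : UniqueDiffOn ℝ s) (hx : x ∈ s) {f : X → W}
    (hflat : ∀ m : ℕ, iteratedFDerivWithin ℝ m f s x = 0) (n : ℕ) :
    iteratedFDerivWithin ℝ n (fun y => fderivWithin ℝ f s y) s x = 0 := by
  have h := iteratedFDerivWithin_succ_eq_comp_right (𝕜 := ℝ) (f := f) (n := n) hs hx
  rw [hflat (n + 1)] at h
  exact ((LinearIsometryEquiv.map_eq_zero_iff _).1 h.symm)

lemma flat_clm_comp (hs : UniqueDiffOn ℝ s) (hx : x ∈ s) (L : U →L[ℝ] V) {f : X → U} {n : ℕ}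
    (hf : ContDiffOn ℝ n f s)
    (hflat : iteratedFDerivWithin ℝ n f s x = 0) :
    iteratedFDerivWithin ℝ n (fun y => L (f y)) s x = 0 := by
  have h := L.iteratedFDerivWithin_comp_left (hf x hx) hs hx (le_refl (n : WithTop ℕ∞))
  rw [show (L ∘ f) = fun y => L (f y) from rfl] at h
  rw [h, hflat]
  ext m
  simp

end Flat

section CubeFacts
variable {d : ℕ}

lemma cube_eq_preimage :
    cube d = ((MeasurableEquiv.toLp 2 (Fin d → ℝ)).symm) ⁻¹' (Set.univ.pi fun _ => Set.Icc (0:ℝ) 1) := by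
  ext θ
  simp only [cube, Set.mem_pi, Set.mem_setOf_eq,
    Set.mem_preimage, Set.mem_univ, forall_true_left, Set.mem_Icc, MeasurableEquiv.coe_mk,
    WithLp.equiv, Equiv.refl_apply, forall_and]
  exact Iff.rfl

lemma isCompact_cube : IsCompact (cube d) := by
  have h : cube d = (EuclideanSpace.equiv (Fin d) ℝ).toHomeomorph ⁻¹'
      (Set.univ.pi fun _ => Set.Icc (0:ℝ) 1) := by
    ext θ
    simp only [cube, Set.mem_pi, Set.mem_setOf_eq, Set.mem_preimage, Set.mem_univ,
      forall_true_left, Set.mem_Icc, forall_and]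
    exact Iff.rfl
  rw [h, Homeomorph.isCompact_preimage]
  exact isCompact_univ_pi fun _ => isCompact_Icc

lemma measurableSet_cube : MeasurableSet (cube d) := by
  rw [cube_eq_preimage]
  exact (MeasurableSet.univ_pi fun _ => measurableSet_Icc).preimage
    ((MeasurableEquiv.toLp 2 (Fin d → ℝ)).symm).measurable

lemma volume_cube : volume (cube d) = 1 := by
  rw [cube_eq_preimage,
    (EuclideanSpace.volume_preserving_symm_measurableEquiv_toLp (Fin d)).measure_preimage
      ((MeasurableSet.univ_pi fun _ => measurableSet_Icc).nullMeasurableSet)]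
  rw [show (Set.univ.pi fun _ : Fin d => Set.Icc (0:ℝ) 1) = Set.Icc (fun _ => 0) (fun _ => 1) from by ext x; simp [Set.mem_pi, Pi.le_def, forall_and], Real.volume_Icc_pi]
  simp

lemma setIntegral_cube_const {W : Type*} [NormedAddCommGroup W] [NormedSpace ℝ W]
    [CompleteSpace W] (c : W) : ∫ _ in cube d, c = c := by
  rw [setIntegral_const, measureReal_def, volume_cube]
  simp

lemma cube_nonempty : (cube d).Nonempty := ⟨0, fun i => by simp⟩

end CubeFacts

/-- The domain `𝕋^d × B` (lifted). -/
def dom (d : ℕ) (r : ℝ) : Set (EuclideanSpace ℝ (Fin d) × EuclideanSpace ℝ (Fin d)) :=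
  (Set.univ : Set (EuclideanSpace ℝ (Fin d))) ×ˢ Metric.ball (0 : EuclideanSpace ℝ (Fin d)) r

section DomFacts
variable {d : ℕ} {r : ℝ}

lemma isOpen_dom : IsOpen (dom d r) := isOpen_univ.prod Metric.isOpen_ball

lemma uniqueDiffOn_dom : UniqueDiffOn ℝ (dom d r) := isOpen_dom.uniqueDiffOn

lemma mem_dom {p : EuclideanSpace ℝ (Fin d) × EuclideanSpace ℝ (Fin d)} :
    p ∈ dom d r ↔ p.2 ∈ Metric.ball (0 : EuclideanSpace ℝ (Fin d)) r := by
  simp [dom]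

lemma mem_dom' {θ I : EuclideanSpace ℝ (Fin d)} (hI : I ∈ Metric.ball (0 : EuclideanSpace ℝ (Fin d)) r) :
    (θ, I) ∈ dom d r := mem_dom.2 hI

end DomFacts

/-- Adjoint as a continuous linear map, for real Hilbert spaces. -/
def adjCLM (E : Type*) [NormedAddCommGroup E] [InnerProductSpace ℝ E] [CompleteSpace E] :
    (E →L[ℝ] E) →L[ℝ] (E →L[ℝ] E) :=
  LinearMap.mkContinuous
    { toFun := fun S => ContinuousLinearMap.adjoint S
      map_add' := fun S T => map_add (ContinuousLinearMap.adjoint) S T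
      map_smul' := fun c S => by
        simpa [starRingEnd_apply] using
          (ContinuousLinearMap.adjoint (𝕜 := ℝ) (E := E) (F := E)).map_smulₛₗ c S } 1
    fun S => by simp

@[simp] lemma adjCLM_apply {E : Type*} [NormedAddCommGroup E] [InnerProductSpace ℝ E]
    [CompleteSpace E] (S : E →L[ℝ] E) : adjCLM E S = ContinuousLinearMap.adjoint S := rfl

section Avg
variable {d : ℕ} {r : ℝ}
variable {W : Type} [NormedAddCommGroup W] [NormedSpace ℝ W] [CompleteSpace W]

lemma continuousOn_slice {F : EuclideanSpace ℝ (Fin d) × EuclideanSpace ℝ (Fin d) → W}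
    (hF : ContinuousOn F (dom d r)) {I : EuclideanSpace ℝ (Fin d)}
    (hI : I ∈ Metric.ball (0 : EuclideanSpace ℝ (Fin d)) r) :
    ContinuousOn (fun θ => F (θ, I)) (cube d) := by
  refine hF.comp (Continuous.continuousOn (by continuity)) fun θ _ => mem_dom' hI

lemma integrableOn_slice {F : EuclideanSpace ℝ (Fin d) × EuclideanSpace ℝ (Fin d) → W}
    (hF : ContinuousOn F (dom d r)) {I : EuclideanSpace ℝ (Fin d)}
    (hI : I ∈ Metric.ball (0 : EuclideanSpace ℝ (Fin d)) r) :
    IntegrableOn (fun θ => F (θ, I)) (cube d) := by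
  exact (continuousOn_slice hF hI).integrableOn_compact isCompact_cube

lemma hasFDerivAt_avg {F : EuclideanSpace ℝ (Fin d) × EuclideanSpace ℝ (Fin d) → W}
    (hF : ∀ k : ℕ, ContDiffOn ℝ k F (dom d r)) {I₀ : EuclideanSpace ℝ (Fin d)}
    (hI₀ : I₀ ∈ Metric.ball (0 : EuclideanSpace ℝ (Fin d)) r) :
    HasFDerivAt (fun I => ∫ θ in cube d, F (θ, I))
      (∫ θ in cube d, (fderivWithin ℝ F (dom d r) (θ, I₀)).comp
        (ContinuousLinearMap.inr ℝ (EuclideanSpace ℝ (Fin d)) (EuclideanSpace ℝ (Fin d)))) I₀ := by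
  have hI₀r : ‖I₀‖ < r := by simpa using hI₀
  set ε : ℝ := (r - ‖I₀‖) / 2 with hε
  have hεpos : 0 < ε := by simp only [hε]; linarith
  have hball : Metric.closedBall I₀ ε ⊆ Metric.ball (0 : EuclideanSpace ℝ (Fin d)) r := by
    intro I hIc
    simp only [Metric.mem_closedBall, dist_eq_norm] at hIc
    simp only [Metric.mem_ball, dist_zero_right]
    have h1 : ‖I‖ ≤ ‖I - I₀‖ + ‖I₀‖ := by
      simpa using norm_add_le (I - I₀) I₀
    have : ε + ‖I₀‖ < r := by simp only [hε]; linarith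
    linarith
  have hKsub : cube d ×ˢ Metric.closedBall I₀ ε ⊆ dom d r := fun q hq =>
    mem_dom.2 (hball hq.2)
  have hDFc : ContinuousOn (fderivWithin ℝ F (dom d r)) (dom d r) :=
    (hF 1).continuousOn_fderivWithin uniqueDiffOn_dom (by exact_mod_cast le_refl (1 : ℕ))
  obtain ⟨C, hC⟩ := ((isCompact_cube.prod (isCompact_closedBall I₀ ε)).exists_bound_of_continuousOn
    (hDFc.mono hKsub))
  have hC0 : 0 ≤ C := le_trans (norm_nonneg _)
    (hC (0, I₀) ⟨fun i => by simp, Metric.mem_closedBall_self hεpos.le⟩)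
  apply hasFDerivAt_integral_of_dominated_of_fderiv_le (hs := Metric.ball_mem_nhds I₀ hεpos)
    (bound := fun _ => C) (μ := volume.restrict (cube d))
    (F := fun I θ => F (θ, I))
    (F' := fun I θ => (fderivWithin ℝ F (dom d r) (θ, I)).comp
      (ContinuousLinearMap.inr ℝ (EuclideanSpace ℝ (Fin d)) (EuclideanSpace ℝ (Fin d))))
    (x₀ := I₀)
  · filter_upwards [Metric.isOpen_ball.mem_nhds hI₀] with I hI
    exact ((continuousOn_slice (hF 0).continuousOn hI).aestronglyMeasurable measurableSet_cube)
  · exact integrableOn_slice (hF 0).continuousOn hI₀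
  · refine ContinuousOn.aestronglyMeasurable ?_ measurableSet_cube
    have : ContinuousOn (fun θ => fderivWithin ℝ F (dom d r) (θ, I₀)) (cube d) :=
      hDFc.comp (Continuous.continuousOn (by continuity)) fun θ _ => mem_dom' hI₀
    exact ((ContinuousLinearMap.compL ℝ (EuclideanSpace ℝ (Fin d))
      (EuclideanSpace ℝ (Fin d) × EuclideanSpace ℝ (Fin d)) W).flip
      (ContinuousLinearMap.inr ℝ _ _)).continuous.comp_continuousOn this
  · refine (ae_restrict_mem measurableSet_cube).mono fun θ hθ I hI => ?_
    refine ContinuousLinearMap.opNorm_le_bound _ hC0 fun v => ?_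
    have hmem : (θ, I) ∈ cube d ×ˢ Metric.closedBall I₀ ε :=
      ⟨hθ, Metric.ball_subset_closedBall hI⟩
    calc ‖(fderivWithin ℝ F (dom d r) (θ, I)).comp (ContinuousLinearMap.inr ℝ _ _) v‖
        = ‖fderivWithin ℝ F (dom d r) (θ, I) (0, v)‖ := rfl
      _ ≤ ‖fderivWithin ℝ F (dom d r) (θ, I)‖ * ‖((0 : EuclideanSpace ℝ (Fin d)), v)‖ :=
          ContinuousLinearMap.le_opNorm _ _
      _ ≤ C * ‖v‖ := by
          have hnv : ‖((0 : EuclideanSpace ℝ (Fin d)), v)‖ = ‖v‖ := by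
            simp [Prod.norm_def]
          rw [hnv]
          exact mul_le_mul_of_nonneg_right (hC _ hmem) (norm_nonneg v)
  · exact (integrableOn_const (by rw [volume_cube]; exact ENNReal.one_ne_top))
  · refine (ae_restrict_mem measurableSet_cube).mono fun θ hθ I hI => ?_
    have hmem : (θ, I) ∈ dom d r := mem_dom' (hball (Metric.ball_subset_closedBall hI))
    have hdiff : DifferentiableAt ℝ F (θ, I) :=
      (((hF 1).differentiableOn (by simp)).differentiableAt
        (isOpen_dom.mem_nhds hmem))
    have hd : HasFDerivAt F (fderivWithin ℝ F (dom d r) (θ, I)) (θ, I) := by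
      rw [fderivWithin_of_isOpen isOpen_dom hmem]
      exact hdiff.hasFDerivAt
    exact hd.comp I (hasFDerivAt_prodMk_right θ I)

end Avg

section Avg2
variable {d : ℕ} {r : ℝ}

/-- The `θ`-average over the cube of a smooth function is smooth in `I`. -/
lemma contDiffOn_avg : ∀ (k : ℕ) (W : Type) [NormedAddCommGroup W] [NormedSpace ℝ W]
    [CompleteSpace W] (F : EuclideanSpace ℝ (Fin d) × EuclideanSpace ℝ (Fin d) → W),
    (∀ j : ℕ, ContDiffOn ℝ j F (dom d r)) →
    ContDiffOn ℝ k (fun I => ∫ θ in cube d, F (θ, I))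
      (Metric.ball (0 : EuclideanSpace ℝ (Fin d)) r) := by
  intro k
  induction k with
  | zero =>
    intro W _ _ _ F hF
    rw [show ((0:ℕ) : WithTop ℕ∞) = 0 from rfl, contDiffOn_zero]
    exact fun I hI => (hasFDerivAt_avg hF hI).continuousAt.continuousWithinAt
  | succ k IH =>
    intro W _ _ _ F hF
    rw [show ((k+1:ℕ) : WithTop ℕ∞) = (k : WithTop ℕ∞) + 1 by push_cast; ring]
    rw [contDiffOn_succ_iff_fderivWithin Metric.isOpen_ball.uniqueDiffOn]
    have hBF : ∀ j : ℕ, ContDiffOn ℝ j (fun q => (fderivWithin ℝ F (dom d r) q).comp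
        (ContinuousLinearMap.inr ℝ (EuclideanSpace ℝ (Fin d)) (EuclideanSpace ℝ (Fin d))))
        (dom d r) := by
      intro j
      exact ((hF (j+1)).fderivWithin uniqueDiffOn_dom
        (by exact_mod_cast le_refl (j+1 : ℕ))).continuousLinearMap_comp
        ((ContinuousLinearMap.compL ℝ (EuclideanSpace ℝ (Fin d))
          (EuclideanSpace ℝ (Fin d) × EuclideanSpace ℝ (Fin d)) W).flip
          (ContinuousLinearMap.inr ℝ _ _))
    refine ⟨fun I hI => (hasFDerivAt_avg hF hI).differentiableAt.differentiableWithinAt,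
      fun h => absurd h (by simp), ?_⟩
    refine (IH (EuclideanSpace ℝ (Fin d) →L[ℝ] W) _ hBF).congr fun I hI => ?_
    rw [fderivWithin_of_isOpen Metric.isOpen_ball hI]
    exact (hasFDerivAt_avg hF hI).fderiv
end Avg2

section Main
variable {d : ℕ} {r : ℝ}

local notation "E" => EuclideanSpace ℝ (Fin d)

lemma smooth_comp_deriv {W V : Type*} [NormedAddCommGroup W] [NormedSpace ℝ W]
    [NormedAddCommGroup V] [NormedSpace ℝ V]
    {F : E × E → W} (hF : ∀ j : ℕ, ContDiffOn ℝ j F (dom d r))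
    (L : ((E × E) →L[ℝ] W) →L[ℝ] V) (j : ℕ) :
    ContDiffOn ℝ j (fun q => L (fderivWithin ℝ F (dom d r) q)) (dom d r) :=
  ((hF (j+1)).fderivWithin uniqueDiffOn_dom
    (by exact_mod_cast le_refl (j+1 : ℕ))).continuousLinearMap_comp L

lemma compL_flip_apply {W : Type*} [NormedAddCommGroup W] [NormedSpace ℝ W]
    {X Y : Type*} [NormedAddCommGroup X] [NormedSpace ℝ X] [NormedAddCommGroup Y]
    [NormedSpace ℝ Y] (L : X →L[ℝ] Y) (T : Y →L[ℝ] W) :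
    (ContinuousLinearMap.compL ℝ X Y W).flip L T = T.comp L := rfl


lemma flat_zero_order {W : Type*} [NormedAddCommGroup W] [NormedSpace ℝ W]
    {X : Type*} [NormedAddCommGroup X] [NormedSpace ℝ X] {s : Set X} {x : X}
    {f : X → W} (h : iteratedFDerivWithin ℝ 0 f s x = 0) : f x = 0 := by
  have := congrArg (fun Φ : ContinuousMultilinearMap ℝ (fun _ : Fin 0 => X) W =>
    Φ (fun _ => 0)) h
  simpa [iteratedFDerivWithin_zero_apply] using this

lemma flat_main (hr : 0 < r) : ∀ (n : ℕ) (W : Type) [NormedAddCommGroup W] [NormedSpace ℝ W]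
    [CompleteSpace W] (F : E × E → W),
    (∀ j : ℕ, ContDiffOn ℝ j F (dom d r)) →
    (∀ p ∈ dom d r, p.2 = 0 → ∀ m : ℕ,
      iteratedFDerivWithin ℝ m
        (fun q => (fderivWithin ℝ F (dom d r) q).comp (ContinuousLinearMap.inl ℝ E E))
        (dom d r) p = 0) →
    ∀ p ∈ dom d r, p.2 = 0 →
      iteratedFDerivWithin ℝ n (fun q => F q - ∫ θ in cube d, F (θ, q.2)) (dom d r) p = 0 := by
  intro n
  induction n with
  | zero =>
    intro W _ _ _ F hF hA p hp hp2
    have h0r : (0 : E) ∈ Metric.ball (0 : E) r := Metric.mem_ball_self hr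
    -- F (·, 0) is constant
    have hdiff : ∀ θ : E, DifferentiableAt ℝ (fun θ' : E => F (θ', (0:E))) θ := by
      intro θ
      have hmem : ((θ, (0:E)) : E × E) ∈ dom d r := mem_dom' h0r
      have : DifferentiableAt ℝ F (θ, (0:E)) :=
        ((hF 1).differentiableOn (by simp)).differentiableAt
          (isOpen_dom.mem_nhds hmem)
      exact this.comp θ (differentiableAt_id.prodMk (differentiableAt_const _))
    have hfzero : ∀ θ : E, fderiv ℝ (fun θ' : E => F (θ', (0:E))) θ = 0 := by
      intro θ
      have hmem : ((θ, (0:E)) : E × E) ∈ dom d r := mem_dom' h0r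
      have hDF : DifferentiableAt ℝ F (θ, (0:E)) :=
        ((hF 1).differentiableOn (by simp)).differentiableAt
          (isOpen_dom.mem_nhds hmem)
      have hcomp : HasFDerivAt (fun θ' : E => F (θ', (0:E)))
          ((fderiv ℝ F (θ, (0:E))).comp (ContinuousLinearMap.inl ℝ E E)) θ :=
        hDF.hasFDerivAt.comp θ (hasFDerivAt_prodMk_left θ (0:E))
      rw [hcomp.fderiv, ← fderivWithin_of_isOpen isOpen_dom hmem]
      exact flat_zero_order (f := fun q => (fderivWithin ℝ F (dom d r) q).comp
        (ContinuousLinearMap.inl ℝ E E)) (hA (θ, (0:E)) hmem rfl 0)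
    have hconst : ∀ θ : E, F (θ, (0:E)) = F (p.1, (0:E)) := fun θ =>
      is_const_of_fderiv_eq_zero (fun θ' => hdiff θ') hfzero θ p.1
    have hint : (∫ θ in cube d, F (θ, p.2)) = F p := by
      rw [hp2, setIntegral_congr_fun measurableSet_cube fun θ _ => hconst θ,
        setIntegral_cube_const]
      rw [show F (p.1, (0:E)) = F p from by rw [← hp2]]
    ext m
    rw [iteratedFDerivWithin_zero_apply, ContinuousMultilinearMap.zero_apply, hint, sub_self]
  | succ n IH =>
    intro W _ _ _ F hF hA p hp hp2
    -- abbreviations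
    set BF : E × E → (E →L[ℝ] W) := fun q => (fderivWithin ℝ F (dom d r) q).comp
      (ContinuousLinearMap.inr ℝ E E) with hBFdef
    set AF : E × E → (E →L[ℝ] W) := fun q => (fderivWithin ℝ F (dom d r) q).comp
      (ContinuousLinearMap.inl ℝ E E) with hAFdef
    have hBF : ∀ j : ℕ, ContDiffOn ℝ j BF (dom d r) := fun j =>
      smooth_comp_deriv hF ((ContinuousLinearMap.compL ℝ E (E × E) W).flip
        (ContinuousLinearMap.inr ℝ E E)) j
    have hAF : ∀ j : ℕ, ContDiffOn ℝ j AF (dom d r) := fun j =>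
      smooth_comp_deriv hF ((ContinuousLinearMap.compL ℝ E (E × E) W).flip
        (ContinuousLinearMap.inl ℝ E E)) j
    -- flatness of ∂θ BF (symmetry of second derivatives)
    have hABF : ∀ p' ∈ dom d r, p'.2 = 0 → ∀ m : ℕ,
        iteratedFDerivWithin ℝ m
          (fun q => (fderivWithin ℝ BF (dom d r) q).comp (ContinuousLinearMap.inl ℝ E E))
          (dom d r) p' = 0 := by
      set LL : ((E × E) →L[ℝ] (E →L[ℝ] W)) →L[ℝ] (E →L[ℝ] (E →L[ℝ] W)) :=
        ((ContinuousLinearMap.flipₗᵢ ℝ E E W).toLinearIsometry.toContinuousLinearMap).comp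
          ((ContinuousLinearMap.compL ℝ E (E × E) (E →L[ℝ] W)).flip
            (ContinuousLinearMap.inr ℝ E E)) with hLLdef
      have hEq : Set.EqOn
          (fun q => (fderivWithin ℝ BF (dom d r) q).comp (ContinuousLinearMap.inl ℝ E E))
          (fun q => LL (fderivWithin ℝ AF (dom d r) q)) (dom d r) := by
        intro q hq
        have hDF2diff : DifferentiableWithinAt ℝ (fderivWithin ℝ F (dom d r)) (dom d r) q :=
          (((hF 2).fderivWithin uniqueDiffOn_dom (by exact_mod_cast le_refl (2:ℕ)) :
            ContDiffOn ℝ (1:ℕ) _ _).differentiableOn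
            (by simp)) q hq
        have hD2B : fderivWithin ℝ BF (dom d r) q =
            ((ContinuousLinearMap.compL ℝ E (E × E) W).flip
              (ContinuousLinearMap.inr ℝ E E)).comp
              (fderivWithin ℝ (fderivWithin ℝ F (dom d r)) (dom d r) q) :=
          (((ContinuousLinearMap.compL ℝ E (E × E) W).flip
            (ContinuousLinearMap.inr ℝ E E)).hasFDerivAt.comp_hasFDerivWithinAt q
            hDF2diff.hasFDerivWithinAt).fderivWithin (uniqueDiffOn_dom q hq)
        have hD2A : fderivWithin ℝ AF (dom d r) q =
            ((ContinuousLinearMap.compL ℝ E (E × E) W).flip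
              (ContinuousLinearMap.inl ℝ E E)).comp
              (fderivWithin ℝ (fderivWithin ℝ F (dom d r)) (dom d r) q) :=
          (((ContinuousLinearMap.compL ℝ E (E × E) W).flip
            (ContinuousLinearMap.inl ℝ E E)).hasFDerivAt.comp_hasFDerivWithinAt q
            hDF2diff.hasFDerivWithinAt).fderivWithin (uniqueDiffOn_dom q hq)
        have e1 : Set.EqOn (fderivWithin ℝ F (dom d r)) (fderiv ℝ F) (dom d r) := fun y hy =>
          fderivWithin_of_isOpen isOpen_dom hy
        have hD2eq : fderivWithin ℝ (fderivWithin ℝ F (dom d r)) (dom d r) q =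
            fderiv ℝ (fderiv ℝ F) q := by
          rw [fderivWithin_congr e1 (e1 hq), fderivWithin_of_isOpen isOpen_dom hq]
        have hsymm : IsSymmSndFDerivAt ℝ F q :=
          ((hF 2).contDiffAt (isOpen_dom.mem_nhds hq)).isSymmSndFDerivAt
            (by simp)
        refine ContinuousLinearMap.ext fun a => ContinuousLinearMap.ext fun b => ?_
        simp only [hD2B, hD2A, hLLdef, ContinuousLinearMap.comp_apply, compL_flip_apply,
          ContinuousLinearMap.coe_comp', Function.comp_apply,
          LinearIsometry.coe_toContinuousLinearMap, LinearIsometryEquiv.coe_toLinearIsometry,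
          ContinuousLinearMap.coe_flipₗᵢ, ContinuousLinearMap.flip_apply]
        rw [hD2eq]
        exact hsymm _ _
      intro p' hp' hp2' m
      rw [iteratedFDerivWithin_congr hEq hp']
      exact flat_clm_comp (X := E × E) (U := (E × E) →L[ℝ] (E →L[ℝ] W))
        (V := E →L[ℝ] (E →L[ℝ] W)) (s := dom d r) (x := p')
        (f := fderivWithin ℝ AF (dom d r)) (n := m) uniqueDiffOn_dom hp' LL
        ((hAF (m+1)).fderivWithin uniqueDiffOn_dom (by exact_mod_cast le_refl (m+1 : ℕ)))
        (flat_fderivWithin uniqueDiffOn_dom hp' (fun m' => hA p' hp' hp2' m') m)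
    -- the derivative of h equals L₁ (AF q) + L₂ (hH q)
    have hq2ball : ∀ q ∈ dom d r, q.2 ∈ Metric.ball (0 : E) r := fun q hq => mem_dom.1 hq
    have hEqD : Set.EqOn
        (fun y => fderivWithin ℝ (fun q => F q - ∫ θ in cube d, F (θ, q.2)) (dom d r) y)
        (fun q => ((ContinuousLinearMap.compL ℝ (E × E) E W).flip
            (ContinuousLinearMap.fst ℝ E E)) (AF q) +
          ((ContinuousLinearMap.compL ℝ (E × E) E W).flip (ContinuousLinearMap.snd ℝ E E))
            (BF q - ∫ θ in cube d, BF (θ, q.2))) (dom d r) := by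
      intro q hq
      have hFd : HasFDerivAt F (fderivWithin ℝ F (dom d r) q) q := by
        rw [fderivWithin_of_isOpen isOpen_dom hq]
        exact (((hF 1).differentiableOn (by simp)).differentiableAt
          (isOpen_dom.mem_nhds hq)).hasFDerivAt
      have havg : HasFDerivAt (fun x : E × E => ∫ θ in cube d, F (θ, x.2))
          ((∫ θ in cube d, BF (θ, q.2)).comp (ContinuousLinearMap.snd ℝ E E)) q :=
        (hasFDerivAt_avg hF (hq2ball q hq)).comp q hasFDerivAt_snd
      have hsub : HasFDerivAt (fun q => F q - ∫ θ in cube d, F (θ, q.2)) _ q := hFd.sub havg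
      simp only
      rw [fderivWithin_of_isOpen isOpen_dom hq, hsub.fderiv]
      refine ContinuousLinearMap.ext fun v => ?_
      simp only [ContinuousLinearMap.sub_apply, ContinuousLinearMap.comp_apply,
        ContinuousLinearMap.add_apply, compL_flip_apply, ContinuousLinearMap.coe_snd',
        ContinuousLinearMap.coe_fst', hAFdef, hBFdef, ContinuousLinearMap.inl_apply,
        ContinuousLinearMap.inr_apply]
      have hv : ((v.1, (0:E)) : E × E) + ((0:E), v.2) = v := by
        simp
      rw [show fderivWithin ℝ F (dom d r) q v =
          fderivWithin ℝ F (dom d r) q (v.1, (0:E)) +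
          fderivWithin ℝ F (dom d r) q ((0:E), v.2) from by rw [← map_add, hv]]
      abel
    -- conclude
    rw [iteratedFDerivWithin_succ_eq_comp_right uniqueDiffOn_dom hp, Function.comp_apply,
      iteratedFDerivWithin_congr hEqD hp]
    have havgBF : ContDiffOn ℝ n (fun q : E × E => ∫ θ in cube d, BF (θ, q.2)) (dom d r) :=
      (contDiffOn_avg n (E →L[ℝ] W) BF hBF).comp contDiff_snd.contDiffOn
        fun q hq => hq2ball q hq
    have hφ₁ : ContDiffOn ℝ n (fun q => ((ContinuousLinearMap.compL ℝ (E × E) E W).flip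
        (ContinuousLinearMap.fst ℝ E E)) (AF q)) (dom d r) :=
      (hAF n).continuousLinearMap_comp _
    have hφ₂ : ContDiffOn ℝ n (fun q => ((ContinuousLinearMap.compL ℝ (E × E) E W).flip
        (ContinuousLinearMap.snd ℝ E E)) (BF q - ∫ θ in cube d, BF (θ, q.2))) (dom d r) :=
      ((hBF n).sub havgBF).continuousLinearMap_comp _
    rw [iteratedFDerivWithin_add_apply' (hφ₁ p hp) (hφ₂ p hp) uniqueDiffOn_dom hp]
    have hz₁ : iteratedFDerivWithin ℝ n (fun q =>
        ((ContinuousLinearMap.compL ℝ (E × E) E W).flip (ContinuousLinearMap.fst ℝ E E))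
        (AF q)) (dom d r) p = 0 :=
      flat_clm_comp uniqueDiffOn_dom hp _ (hAF n) (hA p hp hp2 n)
    have hz₂ : iteratedFDerivWithin ℝ n (fun q =>
        ((ContinuousLinearMap.compL ℝ (E × E) E W).flip (ContinuousLinearMap.snd ℝ E E))
        (BF q - ∫ θ in cube d, BF (θ, q.2))) (dom d r) p = 0 :=
      flat_clm_comp uniqueDiffOn_dom hp _ ((hBF n).sub havgBF)
        (IH (E →L[ℝ] W) BF hBF hABF p hp hp2)
    rw [hz₁, hz₂, add_zero]
    exact LinearIsometryEquiv.map_zero _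


lemma flat_sub {X W : Type*} [NormedAddCommGroup X] [NormedSpace ℝ X]
    [NormedAddCommGroup W] [NormedSpace ℝ W] {s : Set X} {x : X}
    (hs : UniqueDiffOn ℝ s) (hx : x ∈ s) {f g : X → W} {n : ℕ}
    (hf : ContDiffOn ℝ n f s) (hg : ContDiffOn ℝ n g s)
    (h1 : iteratedFDerivWithin ℝ n f s x = 0) (h2 : iteratedFDerivWithin ℝ n g s x = 0) :
    iteratedFDerivWithin ℝ n (fun y => f y - g y) s x = 0 := by
  simp only [sub_eq_add_neg]
  rw [iteratedFDerivWithin_add_apply' (hf x hx) (hg.neg x hx) hs hx, h1,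
    show (fun y => -(g y)) = -g from rfl, iteratedFDerivWithin_neg_apply hs hx, h2]
  simp

lemma flat_A (hr : 0 < r) {g₁ g₂ : E × E → E}
    (hsm₁ : ∀ j : ℕ, ContDiffOn ℝ j g₁ (dom d r)) (hsm₂ : ∀ j : ℕ, ContDiffOn ℝ j g₂ (dom d r))
    (hid : ∀ p ∈ dom d r, ∀ a c : E,
      (inner ℝ (fderivWithin ℝ g₁ (dom d r) p ((a, (0:E)))) c : ℝ) =
        -(inner ℝ a (fderivWithin ℝ g₂ (dom d r) p (((0:E), c))))
          - inner ℝ (fderivWithin ℝ g₁ (dom d r) p ((a, (0:E))))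
              (fderivWithin ℝ g₂ (dom d r) p (((0:E), c)))
          + inner ℝ (fderivWithin ℝ g₂ (dom d r) p ((a, (0:E))))
              (fderivWithin ℝ g₁ (dom d r) p (((0:E), c))))
    (hflat₂ : ∀ p ∈ dom d r, p.2 = 0 → ∀ m : ℕ,
      iteratedFDerivWithin ℝ m g₂ (dom d r) p = 0) :
    ∀ p ∈ dom d r, p.2 = 0 → ∀ m : ℕ,
      iteratedFDerivWithin ℝ m
        (fun q => (fderivWithin ℝ g₁ (dom d r) q).comp (ContinuousLinearMap.inl ℝ E E))
        (dom d r) p = 0 := by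
  intro p hp hp2 m
  -- the identity as an equality of functions into continuous linear maps
  have hEq : Set.EqOn
      (fun q => (fderivWithin ℝ g₁ (dom d r) q).comp (ContinuousLinearMap.inl ℝ E E))
      (fun q =>
        ((ContinuousLinearMap.compL ℝ E E E).flip
          ((fderivWithin ℝ g₂ (dom d r) q).comp (ContinuousLinearMap.inl ℝ E E)))
          (adjCLM E ((fderivWithin ℝ g₁ (dom d r) q).comp (ContinuousLinearMap.inr ℝ E E)))
        - adjCLM E ((fderivWithin ℝ g₂ (dom d r) q).comp (ContinuousLinearMap.inr ℝ E E))
        - (ContinuousLinearMap.compL ℝ E E E)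
            (adjCLM E ((fderivWithin ℝ g₂ (dom d r) q).comp (ContinuousLinearMap.inr ℝ E E)))
            ((fderivWithin ℝ g₁ (dom d r) q).comp (ContinuousLinearMap.inl ℝ E E)))
      (dom d r) := by
    intro q hq
    refine ContinuousLinearMap.ext fun a => ?_
    have key : ∀ c : E,
        (inner ℝ ((fderivWithin ℝ g₁ (dom d r) q).comp (ContinuousLinearMap.inl ℝ E E) a
          - (((ContinuousLinearMap.compL ℝ E E E).flip
              ((fderivWithin ℝ g₂ (dom d r) q).comp (ContinuousLinearMap.inl ℝ E E)))
              (adjCLM E ((fderivWithin ℝ g₁ (dom d r) q).comp (ContinuousLinearMap.inr ℝ E E)))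
            - adjCLM E ((fderivWithin ℝ g₂ (dom d r) q).comp (ContinuousLinearMap.inr ℝ E E))
            - (ContinuousLinearMap.compL ℝ E E E)
                (adjCLM E ((fderivWithin ℝ g₂ (dom d r) q).comp
                  (ContinuousLinearMap.inr ℝ E E)))
                ((fderivWithin ℝ g₁ (dom d r) q).comp (ContinuousLinearMap.inl ℝ E E))) a) c
          : ℝ) = 0 := by
      intro c
      have h := hid q hq a c
      simp only [ContinuousLinearMap.sub_apply, ContinuousLinearMap.comp_apply,
        ContinuousLinearMap.inl_apply, ContinuousLinearMap.inr_apply, compL_flip_apply,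
        ContinuousLinearMap.compL_apply, adjCLM_apply, inner_sub_left,
        ContinuousLinearMap.adjoint_inner_left]
      linarith [real_inner_comm ((fderivWithin ℝ g₂ (dom d r) q) ((a, (0:E))))
        ((fderivWithin ℝ g₁ (dom d r) q) (((0:E), c)))]
    rw [← sub_eq_zero, ← inner_self_eq_zero (𝕜 := ℝ)]
    exact key _
  rw [iteratedFDerivWithin_congr hEq hp]
  -- flatness of the right-hand side
  have hD2flat : ∀ m' : ℕ, iteratedFDerivWithin ℝ m'
      (fun y => fderivWithin ℝ g₂ (dom d r) y) (dom d r) p = 0 :=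
    flat_fderivWithin uniqueDiffOn_dom hp (hflat₂ p hp hp2)
  have hCflat : ∀ m' : ℕ, iteratedFDerivWithin ℝ m'
      (fun q => (fderivWithin ℝ g₂ (dom d r) q).comp (ContinuousLinearMap.inl ℝ E E))
      (dom d r) p = 0 := fun m' =>
    flat_clm_comp uniqueDiffOn_dom hp ((ContinuousLinearMap.compL ℝ E (E × E) E).flip
      (ContinuousLinearMap.inl ℝ E E))
      ((hsm₂ (m'+1)).fderivWithin uniqueDiffOn_dom (by exact_mod_cast le_refl (m'+1 : ℕ)))
      (hD2flat m')
  have hDadjflat : ∀ m' : ℕ, iteratedFDerivWithin ℝ m'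
      (fun q => adjCLM E ((fderivWithin ℝ g₂ (dom d r) q).comp
        (ContinuousLinearMap.inr ℝ E E))) (dom d r) p = 0 := fun m' =>
    flat_clm_comp uniqueDiffOn_dom hp ((adjCLM E).comp
      ((ContinuousLinearMap.compL ℝ E (E × E) E).flip (ContinuousLinearMap.inr ℝ E E)))
      ((hsm₂ (m'+1)).fderivWithin uniqueDiffOn_dom (by exact_mod_cast le_refl (m'+1 : ℕ)))
      (hD2flat m')
  have hsmC : ∀ j : ℕ, ContDiffOn ℝ j
      (fun q => (fderivWithin ℝ g₂ (dom d r) q).comp (ContinuousLinearMap.inl ℝ E E))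
      (dom d r) := fun j =>
    smooth_comp_deriv hsm₂ ((ContinuousLinearMap.compL ℝ E (E × E) E).flip
      (ContinuousLinearMap.inl ℝ E E)) j
  have hsmadjB : ∀ j : ℕ, ContDiffOn ℝ j
      (fun q => adjCLM E ((fderivWithin ℝ g₁ (dom d r) q).comp
        (ContinuousLinearMap.inr ℝ E E))) (dom d r) := fun j =>
    smooth_comp_deriv hsm₁ ((adjCLM E).comp
      ((ContinuousLinearMap.compL ℝ E (E × E) E).flip (ContinuousLinearMap.inr ℝ E E))) j
  have hsmadjD : ∀ j : ℕ, ContDiffOn ℝ j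
      (fun q => adjCLM E ((fderivWithin ℝ g₂ (dom d r) q).comp
        (ContinuousLinearMap.inr ℝ E E))) (dom d r) := fun j =>
    smooth_comp_deriv hsm₂ ((adjCLM E).comp
      ((ContinuousLinearMap.compL ℝ E (E × E) E).flip (ContinuousLinearMap.inr ℝ E E))) j
  have hsmA : ∀ j : ℕ, ContDiffOn ℝ j
      (fun q => (fderivWithin ℝ g₁ (dom d r) q).comp (ContinuousLinearMap.inl ℝ E E))
      (dom d r) := fun j =>
    smooth_comp_deriv hsm₁ ((ContinuousLinearMap.compL ℝ E (E × E) E).flip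
      (ContinuousLinearMap.inl ℝ E E)) j
  have ht₁ : ∀ m' : ℕ, iteratedFDerivWithin ℝ m'
      (fun q => ((ContinuousLinearMap.compL ℝ E E E).flip
        ((fderivWithin ℝ g₂ (dom d r) q).comp (ContinuousLinearMap.inl ℝ E E)))
        (adjCLM E ((fderivWithin ℝ g₁ (dom d r) q).comp (ContinuousLinearMap.inr ℝ E E))))
      (dom d r) p = 0 := fun m' =>
    flat_bilin uniqueDiffOn_dom hp ((ContinuousLinearMap.compL ℝ E E E).flip)
      hsmC hsmadjB hCflat m'
  have ht₃ : ∀ m' : ℕ, iteratedFDerivWithin ℝ m'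
      (fun q => (ContinuousLinearMap.compL ℝ E E E)
        (adjCLM E ((fderivWithin ℝ g₂ (dom d r) q).comp (ContinuousLinearMap.inr ℝ E E)))
        ((fderivWithin ℝ g₁ (dom d r) q).comp (ContinuousLinearMap.inl ℝ E E)))
      (dom d r) p = 0 := fun m' =>
    flat_bilin uniqueDiffOn_dom hp (ContinuousLinearMap.compL ℝ E E E)
      hsmadjD hsmA hDadjflat m'
  have hsm_t₁ : ContDiffOn ℝ m (fun q => ((ContinuousLinearMap.compL ℝ E E E).flip
      ((fderivWithin ℝ g₂ (dom d r) q).comp (ContinuousLinearMap.inl ℝ E E)))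
      (adjCLM E ((fderivWithin ℝ g₁ (dom d r) q).comp (ContinuousLinearMap.inr ℝ E E))))
      (dom d r) := (hsmadjB m).clm_comp (hsmC m)
  have hsm_t₃ : ContDiffOn ℝ m (fun q => (ContinuousLinearMap.compL ℝ E E E)
      (adjCLM E ((fderivWithin ℝ g₂ (dom d r) q).comp (ContinuousLinearMap.inr ℝ E E)))
      ((fderivWithin ℝ g₁ (dom d r) q).comp (ContinuousLinearMap.inl ℝ E E)))
      (dom d r) := (hsmadjD m).clm_comp (hsmA m)
  exact flat_sub uniqueDiffOn_dom hp (hsm_t₁.sub (hsmadjD m)) hsm_t₃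
    (flat_sub uniqueDiffOn_dom hp hsm_t₁ (hsmadjD m) (ht₁ m) (hDadjflat m)) (ht₃ m)

end Main



/-- Let `G(θ, I) = (θ + g₁(θ,I), I + g₂(θ,I))` be a `C^∞` symplectic map
of `𝕋^d × B` (`B` an open ball around `0`, canonical symplectic form; maps are represented
by `ℤ^d`-periodic lifts) with `g₂ = O^∞(I)` flat along `𝕋^d × {0}`.  Then `∂_θ g₁` is flat
along `𝕋^d × {0}` as well, and consequently `g₁(θ,I) = [g₁](I) + O^∞(I)` where
`[g₁](I) = ∫_{𝕋^d} g₁(θ,I) dθ` is the average over the torus. -/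
theorem stmt11 (r : ℝ) (hr : 0 < r)
    (g₁ g₂ : EuclideanSpace ℝ (Fin d) × EuclideanSpace ℝ (Fin d) → EuclideanSpace ℝ (Fin d))
    (Ω : Set (EuclideanSpace ℝ (Fin d) × EuclideanSpace ℝ (Fin d)))
    (hΩ : Ω = (Set.univ : Set (EuclideanSpace ℝ (Fin d))) ×ˢ Metric.ball (0 : EuclideanSpace ℝ (Fin d)) r)
    (G : EuclideanSpace ℝ (Fin d) × EuclideanSpace ℝ (Fin d) →
      EuclideanSpace ℝ (Fin d) × EuclideanSpace ℝ (Fin d))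
    (hG : ∀ p, G p = (p.1 + g₁ p, p.2 + g₂ p))
    (hsm₁ : ContDiffOn ℝ (⊤ : ℕ∞) g₁ Ω) (hsm₂ : ContDiffOn ℝ (⊤ : ℕ∞) g₂ Ω)
    -- periodicity in θ (g₁, g₂ descend to 𝕋^d × B):
    (hper₁ : ∀ p (k : Fin d → ℤ), g₁ (p.1 + intVec k, p.2) = g₁ p)
    (hper₂ : ∀ p (k : Fin d → ℤ), g₂ (p.1 + intVec k, p.2) = g₂ p)
    -- G is symplectic for the canonical symplectic form:
    (hsymp : ∀ p ∈ Ω, ∀ u v, stdSymp (fderiv ℝ G p u) (fderiv ℝ G p v) = stdSymp u v)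
    -- g₂ is O^∞(I):
    (hflat₂ : ∀ p ∈ Ω, p.2 = 0 → ∀ n : ℕ, iteratedFDerivWithin ℝ n g₂ Ω p = 0) :
    -- ∂_θ g₁ is O^∞(I):
    (∀ p ∈ Ω, p.2 = 0 → ∀ n : ℕ,
      iteratedFDerivWithin ℝ n (fun q => fderiv ℝ (fun θ => g₁ (θ, q.2)) q.1) Ω p = 0) ∧
    -- g₁(θ, I) = [g₁](I) + O^∞(I):
    (∀ p ∈ Ω, p.2 = 0 → ∀ n : ℕ,
      iteratedFDerivWithin ℝ n (fun q => g₁ q - ∫ θ in cube d, g₁ (θ, q.2)) Ω p = 0) := by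
  have hΩd : Ω = dom d r := hΩ
  subst hΩd
  have hsm₁' : ∀ j : ℕ, ContDiffOn ℝ j g₁ (dom d r) := fun j => hsm₁.of_le (by exact_mod_cast le_top)
  have hsm₂' : ∀ j : ℕ, ContDiffOn ℝ j g₂ (dom d r) := fun j => hsm₂.of_le (by exact_mod_cast le_top)
  have hd₁ : ∀ q ∈ dom d r, DifferentiableAt ℝ g₁ q := fun q hq =>
    ((hsm₁' 1).differentiableOn (by simp)).differentiableAt
      (isOpen_dom.mem_nhds hq)
  have hd₂ : ∀ q ∈ dom d r, DifferentiableAt ℝ g₂ q := fun q hq =>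
    ((hsm₂' 1).differentiableOn (by simp)).differentiableAt
      (isOpen_dom.mem_nhds hq)
  have hid : ∀ p ∈ dom d r, ∀ a c : EuclideanSpace ℝ (Fin d),
      (inner ℝ (fderivWithin ℝ g₁ (dom d r) p ((a, (0:EuclideanSpace ℝ (Fin d))))) c : ℝ) =
        -(inner ℝ a (fderivWithin ℝ g₂ (dom d r) p (((0:EuclideanSpace ℝ (Fin d)), c))))
          - inner ℝ (fderivWithin ℝ g₁ (dom d r) p ((a, (0:EuclideanSpace ℝ (Fin d)))))
              (fderivWithin ℝ g₂ (dom d r) p (((0:EuclideanSpace ℝ (Fin d)), c)))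
          + inner ℝ (fderivWithin ℝ g₂ (dom d r) p ((a, (0:EuclideanSpace ℝ (Fin d)))))
              (fderivWithin ℝ g₁ (dom d r) p (((0:EuclideanSpace ℝ (Fin d)), c))) := by
    intro p hp a c
    have hGd : HasFDerivAt G
        (((ContinuousLinearMap.fst ℝ (EuclideanSpace ℝ (Fin d)) (EuclideanSpace ℝ (Fin d)))
            + fderiv ℝ g₁ p).prod
          ((ContinuousLinearMap.snd ℝ (EuclideanSpace ℝ (Fin d)) (EuclideanSpace ℝ (Fin d)))
            + fderiv ℝ g₂ p)) p := by
      rw [funext hG]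
      exact (hasFDerivAt_fst.add (hd₁ p hp).hasFDerivAt).prodMk
        (hasFDerivAt_snd.add (hd₂ p hp).hasFDerivAt)
    have h := hsymp p hp (a, (0:EuclideanSpace ℝ (Fin d))) ((0:EuclideanSpace ℝ (Fin d)), c)
    rw [hGd.fderiv] at h
    simp only [stdSymp, ContinuousLinearMap.prod_apply, ContinuousLinearMap.add_apply,
      ContinuousLinearMap.coe_fst', ContinuousLinearMap.coe_snd', zero_add, add_zero,
      inner_add_left, inner_add_right, inner_zero_left, inner_zero_right,
      fderivWithin_of_isOpen isOpen_dom hp] at h ⊢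
    linarith [h]
  have hA := flat_A hr hsm₁' hsm₂' hid hflat₂
  constructor
  · intro p hp hp2 n
    have hEq : Set.EqOn
        (fun q : EuclideanSpace ℝ (Fin d) × EuclideanSpace ℝ (Fin d) =>
          fderiv ℝ (fun θ => g₁ (θ, q.2)) q.1)
        (fun q => (fderivWithin ℝ g₁ (dom d r) q).comp
          (ContinuousLinearMap.inl ℝ (EuclideanSpace ℝ (Fin d)) (EuclideanSpace ℝ (Fin d))))
        (dom d r) := by
      intro q hq
      have hdg : HasFDerivAt g₁ (fderiv ℝ g₁ q) (q.1, q.2) := by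
        rw [Prod.mk.eta]
        exact (hd₁ q hq).hasFDerivAt
      have hc : HasFDerivAt (fun θ => g₁ (θ, q.2))
          ((fderiv ℝ g₁ q).comp (ContinuousLinearMap.inl ℝ (EuclideanSpace ℝ (Fin d))
            (EuclideanSpace ℝ (Fin d)))) q.1 :=
        hdg.comp q.1 (hasFDerivAt_prodMk_left q.1 q.2)
      simp only
      rw [hc.fderiv, fderivWithin_of_isOpen isOpen_dom hq]
    rw [iteratedFDerivWithin_congr hEq hp]
    exact hA p hp hp2 n
  · intro p hp hp2 n
    exact flat_main hr n (EuclideanSpace ℝ (Fin d)) g₁ hsm₁' hA p hp hp2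
end
end
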